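/- Let r ≥ 1 and N ≥ 1. Let H be a real N×r² matrix and suppose there are constants σ > 0 and κ ≥ 1 with σ‖u‖ ≤ ‖H u‖ ≤ κσ‖u‖ for every u ∈ ℝ^{r²}. Let B be a nonzero real r×r matrix satisfying ‖B‖₂² ≥ (α/κ⁴)·‖B‖_F² for some 0 < α ≤ κ⁴. Then there exist vectors p, q ∈ ℝ^r such that ‖H·vec(p qᵀ) − H·vec(B)‖² ≤ κ²·(1 − α/κ⁴)·‖H·vec(B)‖², where vec denotes the vectorization of an r×r matrix into ℝ^{r²} and the norms on vectors are Euclidean. -/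

import Mathlib

open Matrix

/-- The Euclidean norm of a real vector. -/
noncomputable def euclNorm {n : Type*} [Fintype n] (v : n → ℝ) : ℝ :=
  Real.sqrt (∑ i, v i ^ 2)

/-- The Frobenius norm of a real matrix. -/
noncomputable def frobNorm {m n : Type*} [Fintype m] [Fintype n] (M : Matrix m n ℝ) : ℝ :=
  Real.sqrt (∑ i, ∑ j, M i j ^ 2)

/-- The spectral norm of a real matrix (operator norm induced by Euclidean norms). -/
noncomputable def specNorm {m n : Type*} [Fintype m] [Fintype n] (M : Matrix m n ℝ) : ℝ :=
  sSup {x : ℝ | ∃ v : n → ℝ, euclNorm v = 1 ∧ x = euclNorm (M.mulVec v)}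

/-- Vectorization of an `r × r` matrix into `ℝ^{r²}` (indexed by pairs). -/
def vec {r : ℕ} (X : Matrix (Fin r) (Fin r) ℝ) : Fin r × Fin r → ℝ :=
  fun ij => X ij.1 ij.2

/-!
Take a unit vector `q` at which `‖B q‖` attains the spectral norm and put `p = B q`.
Since `‖q‖ = 1`, expanding the square gives
`‖p qᵀ - B‖_F² = ‖B‖_F² - ‖B‖₂² ≤ (1 - α/κ⁴) ‖B‖_F²`.
The two-sided bound on `H` turns this into the claim: `‖H u‖ ≤ κσ ‖u‖` for the error
`u = vec (p qᵀ - B)`, and `σ ‖vec B‖ ≤ ‖H vec B‖` with `‖vec B‖ = ‖B‖_F`.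
-/

section Norms

variable {m n : Type*} [Fintype m] [Fintype n]

lemma euclNorm_nonneg (v : n → ℝ) : 0 ≤ euclNorm v :=
  Real.sqrt_nonneg _

lemma euclNorm_sq (v : n → ℝ) : euclNorm v ^ 2 = ∑ i, v i ^ 2 :=
  Real.sq_sqrt (Finset.sum_nonneg fun _ _ => sq_nonneg _)

lemma frobNorm_sq (M : Matrix m n ℝ) : frobNorm M ^ 2 = ∑ i, ∑ j, M i j ^ 2 :=
  Real.sq_sqrt (Finset.sum_nonneg fun _ _ => Finset.sum_nonneg fun _ _ => sq_nonneg _)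

lemma euclNorm_eq_norm_toLp (v : n → ℝ) : euclNorm v = ‖WithLp.toLp 2 v‖ := by
  simp [euclNorm, EuclideanSpace.norm_eq]

lemma continuous_euclNorm : Continuous (euclNorm (n := n)) :=
  Real.continuous_sqrt.comp (by fun_prop)

lemma isCompact_setOf_euclNorm_eq_one : IsCompact {v : n → ℝ | euclNorm v = 1} := by
  have hsphere : {v : n → ℝ | euclNorm v = 1} =
      (EuclideanSpace.equiv n ℝ).symm ⁻¹' Metric.sphere 0 1 := by
    ext v
    simp [euclNorm_eq_norm_toLp]
  rw [hsphere]
  exact (EuclideanSpace.equiv n ℝ).symm.toHomeomorph.isCompact_preimage.mpr (isCompact_sphere 0 1)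

lemma euclNorm_single_one [DecidableEq n] (i : n) : euclNorm (Pi.single i 1 : n → ℝ) = 1 := by
  simp [euclNorm, Pi.single_apply]

lemma exists_euclNorm_eq_one_euclNorm_mulVec_eq_specNorm [Nonempty n] (M : Matrix m n ℝ) :
    ∃ q : n → ℝ, euclNorm q = 1 ∧ euclNorm (M *ᵥ q) = specNorm M := by
  classical
  have hcont : Continuous fun v : n → ℝ => euclNorm (M *ᵥ v) :=
    continuous_euclNorm.comp (continuous_const.matrix_mulVec continuous_id)
  have hne : {v : n → ℝ | euclNorm v = 1}.Nonempty :=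
    ⟨Pi.single (Classical.arbitrary n) 1, euclNorm_single_one _⟩
  obtain ⟨q, hq, hmax⟩ := isCompact_setOf_euclNorm_eq_one.exists_isMaxOn hne hcont.continuousOn
  refine ⟨q, hq, Eq.symm <| IsGreatest.csSup_eq ⟨⟨q, hq, rfl⟩, ?_⟩⟩
  rintro _ ⟨v, hv, rfl⟩
  exact hmax hv

lemma frobNorm_vecMulVec_mulVec_sub_sq {q : n → ℝ} (hq : euclNorm q = 1) (B : Matrix m n ℝ) :
    frobNorm (vecMulVec (B *ᵥ q) q - B) ^ 2 = frobNorm B ^ 2 - euclNorm (B *ᵥ q) ^ 2 := by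
  have hq2 : ∑ j, q j ^ 2 = 1 := by rw [← euclNorm_sq, hq, one_pow]
  rw [frobNorm_sq, frobNorm_sq, euclNorm_sq, ← Finset.sum_sub_distrib]
  refine Finset.sum_congr rfl fun i _ => ?_
  have hexpand : ∀ j, (vecMulVec (B *ᵥ q) q - B) i j ^ 2 =
      (B *ᵥ q) i ^ 2 * q j ^ 2 - 2 * (B *ᵥ q) i * (B i j * q j) + B i j ^ 2 := fun j => by
    rw [Matrix.sub_apply, vecMulVec_apply]; ring
  simp only [hexpand, Finset.sum_add_distrib, Finset.sum_sub_distrib, ← Finset.mul_sum, hq2]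
  rw [← dotProduct, ← mulVec]
  ring

theorem exists_frobNorm_vecMulVec_sub_sq_eq [Nonempty n] (B : Matrix m n ℝ) :
    ∃ p q, frobNorm (vecMulVec p q - B) ^ 2 = frobNorm B ^ 2 - specNorm B ^ 2 := by
  obtain ⟨q, hq, hspec⟩ := exists_euclNorm_eq_one_euclNorm_mulVec_eq_specNorm B
  exact ⟨B *ᵥ q, q, by rw [frobNorm_vecMulVec_mulVec_sub_sq hq, hspec]⟩

end Norms

lemma euclNorm_vec {r : ℕ} (X : Matrix (Fin r) (Fin r) ℝ) :
    euclNorm (_root_.vec X) = frobNorm X := by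
  simp only [euclNorm, frobNorm, _root_.vec, Fintype.sum_prod_type]

theorem rank_one_replacement_error_general (r N : ℕ) (hr : 1 ≤ r)
    (H : Matrix (Fin N) (Fin r × Fin r) ℝ)
    (σ κ : ℝ) (hσ : 0 < σ)
    (hHlow : ∀ u : Fin r × Fin r → ℝ, σ * euclNorm u ≤ euclNorm (H.mulVec u))
    (hHup : ∀ u : Fin r × Fin r → ℝ, euclNorm (H.mulVec u) ≤ κ * σ * euclNorm u)
    (B : Matrix (Fin r) (Fin r) ℝ)
    (α : ℝ) (hα1 : α ≤ κ ^ 4)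
    (hBspec : (α / κ ^ 4) * frobNorm B ^ 2 ≤ specNorm B ^ 2) :
    ∃ p q : Fin r → ℝ,
      euclNorm (H.mulVec (_root_.vec (vecMulVec p q)) - H.mulVec (_root_.vec B)) ^ 2 ≤
        κ ^ 2 * (1 - α / κ ^ 4) * euclNorm (H.mulVec (_root_.vec B)) ^ 2 := by
  have : Nonempty (Fin r) := ⟨⟨0, hr⟩⟩
  obtain ⟨p, q, hpq⟩ := exists_frobNorm_vecMulVec_sub_sq_eq B
  refine ⟨p, q, ?_⟩
  have hα : 0 ≤ 1 - α / κ ^ 4 := sub_nonneg.mpr (div_le_one_of_le₀ hα1 (by positivity))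
  set u := _root_.vec (vecMulVec p q - B)
  rw [← mulVec_sub]
  calc euclNorm (H *ᵥ u) ^ 2
      ≤ (κ * σ * euclNorm u) ^ 2 := pow_le_pow_left₀ (euclNorm_nonneg _) (hHup u) 2
    _ = κ ^ 2 * σ ^ 2 * (frobNorm B ^ 2 - specNorm B ^ 2) := by rw [euclNorm_vec, ← hpq]; ring
    _ ≤ κ ^ 2 * σ ^ 2 * ((1 - α / κ ^ 4) * frobNorm B ^ 2) := by gcongr; linarith
    _ = κ ^ 2 * (1 - α / κ ^ 4) * (σ * euclNorm (_root_.vec B)) ^ 2 := by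
        rw [euclNorm_vec]; ring
    _ ≤ κ ^ 2 * (1 - α / κ ^ 4) * euclNorm (H *ᵥ _root_.vec B) ^ 2 := by
        have hσB : 0 ≤ σ * euclNorm (_root_.vec B) := mul_nonneg hσ.le (euclNorm_nonneg _)
        gcongr
        exact hHlow _

/-- the paper's Corollary A.3: if `H` has full column rank with condition
number at most `κ` and the nonzero matrix `B` satisfies `‖B‖₂² ≥ (α/κ⁴)‖B‖_F²`, then
replacing `B` by its best rank-1 approximation `p qᵀ` changes `H · vec(B)` by a relative
squared error at most `κ²(1 − α/κ⁴)`. -/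
theorem rank_one_replacement_error (r N : ℕ) (hr : 1 ≤ r) (hN : 1 ≤ N)
    (H : Matrix (Fin N) (Fin r × Fin r) ℝ)
    (σ κ : ℝ) (hσ : 0 < σ) (hκ : 1 ≤ κ)
    (hHlow : ∀ u : Fin r × Fin r → ℝ, σ * euclNorm u ≤ euclNorm (H.mulVec u))
    (hHup : ∀ u : Fin r × Fin r → ℝ, euclNorm (H.mulVec u) ≤ κ * σ * euclNorm u)
    (B : Matrix (Fin r) (Fin r) ℝ) (hB : B ≠ 0)
    (α : ℝ) (hα0 : 0 < α) (hα1 : α ≤ κ ^ 4)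
    (hBspec : (α / κ ^ 4) * frobNorm B ^ 2 ≤ specNorm B ^ 2) :
    ∃ p q : Fin r → ℝ,
      euclNorm (H.mulVec (_root_.vec (vecMulVec p q)) - H.mulVec (_root_.vec B)) ^ 2 ≤
        κ ^ 2 * (1 - α / κ ^ 4) * euclNorm (H.mulVec (_root_.vec B)) ^ 2 :=
  rank_one_replacement_error_general r N hr H σ κ hσ hHlow hHup B α hα1 hBspec
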